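/- arXiv:2401.07880 — 2 statements merged into one kernel-verified Lean document; each statement's English description precedes it below -/
import Mathlib

section
/- Let d, Nα, Nβ ≥ 1, N = Nα + Nβ, let η > 0 and set rα := −(1/(2η))e_1 and rβ := (1/(2η))e_1, where e_1 is the first standard basis vector of ℝ^d. Define V_ee(z_1,…,z_N) := Σ_{1≤i<j≤N} 1/|z_i − z_j| (with value +∞ when z_i = z_j) and V^η(x_1,…,x_{Nα}, y_1,…,y_{Nβ}) := Σ_{i=1}^{Nα} Σ_{j=1}^{Nβ} η/√(1 − 2η(x_i¹ − y_j¹) + η²|x_i − y_j|²) + Σ_{1≤i<j≤Nα} 1/|x_i − x_j| + Σ_{1≤i<j≤Nβ} 1/|y_i − y_j|, where x¹ denotes the first coordinate of x ∈ ℝ^d. Then for every Borel probability measure γα on (ℝ^d)^{Nα} and every Borel probability measure γβ on (ℝ^d)^{Nβ}, ∫ V_ee d((τ_{rα})_#γα ⊗ (τ_{rβ})_#γβ)_sym = ∫ V^η d(γα ⊗ γβ). In particular, for probability measures ρα, ρβ on ℝ^d, the infimum of ∫ V_ee dγ over all γ = ((τ_{rα})_#γα ⊗ (τ_{rβ})_#γβ)_sym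 with γα ∈ Π_{Nα}(ρα), γβ ∈ Π_{Nβ}(ρβ) equals the infimum of ∫ V^η d(γα ⊗ γβ) over γα ∈ Π_{Nα}(ρα), γβ ∈ Π_{Nβ}(ρβ). -/
open MeasureTheory

noncomputable section

/-- Symmetrization of a measure on `(ℝ^d)^N`: `(1/N!) ∑_{σ ∈ S_N} σ_# γ`, where a permutation
`σ` acts on `(ℝ^d)^N` by permuting the `N` blocks. -/
def symN {d N : ℕ} (γ : Measure (Fin N → EuclideanSpace ℝ (Fin d))) :
    Measure (Fin N → EuclideanSpace ℝ (Fin d)) :=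
  ((N.factorial : ENNReal))⁻¹ •
    ∑ σ : Equiv.Perm (Fin N), Measure.map (fun z => z ∘ σ) γ

/-- The Coulomb interaction `∑_{1 ≤ i < j ≤ N} 1/|z_i - z_j|`, with value `+∞` on diagonals. -/
def Vee {d N : ℕ} (z : Fin N → EuclideanSpace ℝ (Fin d)) : ENNReal :=
  ∑ i : Fin N, ∑ j : Fin N, if i < j then (ENNReal.ofReal ‖z i - z j‖)⁻¹ else 0

/-- The interaction energy in center-of-molecule coordinates. -/
def Veta {d Nα Nβ : ℕ} (hd : 0 < d) (η : ℝ)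
    (x : Fin Nα → EuclideanSpace ℝ (Fin d)) (y : Fin Nβ → EuclideanSpace ℝ (Fin d)) : ENNReal :=
  (∑ i : Fin Nα, ∑ j : Fin Nβ,
      ENNReal.ofReal η /
        ENNReal.ofReal (Real.sqrt
          (1 - 2 * η * (x i ⟨0, hd⟩ - y j ⟨0, hd⟩) + η ^ 2 * ‖x i - y j‖ ^ 2))) +
    (∑ i : Fin Nα, ∑ j : Fin Nα, if i < j then (ENNReal.ofReal ‖x i - x j‖)⁻¹ else 0) +
    (∑ i : Fin Nβ, ∑ j : Fin Nβ, if i < j then (ENNReal.ofReal ‖y i - y j‖)⁻¹ else 0)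

/-- The map sending a configuration of the two separated molecules to the corresponding
configuration of the total system: translate by `rα`, `rβ` and concatenate. -/
def couple {d Nα Nβ : ℕ} (rα rβ : EuclideanSpace ℝ (Fin d))
    (p : (Fin Nα → EuclideanSpace ℝ (Fin d)) × (Fin Nβ → EuclideanSpace ℝ (Fin d))) :
    Fin (Nα + Nβ) → EuclideanSpace ℝ (Fin d) :=
  Fin.append (fun i => p.1 i + rα) (fun j => p.2 j + rβ)

/-!
Translating the two molecules by `rα` and `rβ` leaves the intramolecular Coulomb terms unchanged,
while an intermolecular distance becomes `‖(x - y) - η⁻¹ e₁‖`, and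
`η² ‖(x - y) - η⁻¹ e₁‖² = 1 - 2η (x¹ - y¹) + η² ‖x - y‖²`. Hence `V_ee ∘ couple = V^η` pointwise.
Since `V_ee` is permutation invariant, symmetrizing does not change its integral, so the two
integrals agree for every pair `(γα, γβ)`, and then so do the two infima.
-/

lemma sum_sum_ite_ne_eq_two_nsmul {ι M : Type*} [Fintype ι] [LinearOrder ι] [AddCommMonoid M]
    (f : ι → ι → M) (hf : ∀ i j, f i j = f j i) :
    ∑ i, ∑ j, (if i ≠ j then f i j else 0) = 2 • ∑ i, ∑ j, if i < j then f i j else 0 := by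
  have hswap : ∑ i, ∑ j, (if i < j then f i j else 0) = ∑ i, ∑ j, if j < i then f i j else 0 := by
    rw [Finset.sum_comm]
    simp only [hf]
  rw [two_nsmul]
  nth_rewrite 2 [hswap]
  simp only [← Finset.sum_add_distrib]
  refine Fintype.sum_congr _ _ fun i => Fintype.sum_congr _ _ fun j => ?_
  rcases lt_trichotomy i j with h | rfl | h
  · simp [h, h.ne, h.not_gt]
  · simp
  · simp [h, h.ne', h.not_gt]

lemma vee_comp_perm {d N : ℕ} (σ : Equiv.Perm (Fin N)) (z : Fin N → EuclideanSpace ℝ (Fin d)) :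
    Vee (z ∘ σ) = Vee z := by
  -- `2 * Vee` is a sum over all ordered pairs `i ≠ j`, which a relabelling merely reorders.
  have h := sum_sum_ite_ne_eq_two_nsmul (fun i j => (ENNReal.ofReal ‖z i - z j‖)⁻¹)
    fun i j => by rw [norm_sub_rev]
  have hσ := sum_sum_ite_ne_eq_two_nsmul (fun i j => (ENNReal.ofReal ‖z (σ i) - z (σ j)‖)⁻¹)
    fun i j => by rw [norm_sub_rev]
  have hsum : ∑ i, ∑ j, (if i ≠ j then (ENNReal.ofReal ‖z (σ i) - z (σ j)‖)⁻¹ else 0) =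
      ∑ i, ∑ j, (if i ≠ j then (ENNReal.ofReal ‖z i - z j‖)⁻¹ else 0) :=
    Fintype.sum_equiv σ _ _ fun i => Fintype.sum_equiv σ _ _ fun j => by
      simp only [ne_eq, σ.injective.eq_iff]
  rw [hsum, h, nsmul_eq_mul, nsmul_eq_mul] at hσ
  exact (ENNReal.mul_right_inj (by norm_num) (by norm_num)).1 hσ.symm

lemma vee_add_const {d N : ℕ} (z : Fin N → EuclideanSpace ℝ (Fin d))
    (r : EuclideanSpace ℝ (Fin d)) :
    Vee (fun i => z i + r) = Vee z := by
  simp only [Vee, add_sub_add_right_eq_sub]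

lemma vee_append {d m n : ℕ} (x : Fin m → EuclideanSpace ℝ (Fin d))
    (y : Fin n → EuclideanSpace ℝ (Fin d)) :
    Vee (Fin.append x y) = (∑ i, ∑ j, (ENNReal.ofReal ‖x i - y j‖)⁻¹) + Vee x + Vee y := by
  have hcast : ∀ i j : Fin m, Fin.castAdd n i < Fin.castAdd n j ↔ i < j := fun _ _ => Iff.rfl
  have hlt : ∀ (i : Fin m) (j : Fin n), Fin.castAdd n i < Fin.natAdd m j := fun i j => by
    simp only [Fin.lt_def, Fin.val_castAdd, Fin.val_natAdd]; omega
  simp only [Vee, Fin.sum_univ_add, Fin.append_left, Fin.append_right, hcast,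
    Fin.natAdd_lt_natAdd_iff, hlt, (hlt _ _).not_gt, if_true, if_false, Finset.sum_const_zero,
    Finset.sum_add_distrib]
  ring

lemma sq_mul_norm_sub_inv_smul_single {ι : Type*} [Fintype ι] [DecidableEq ι] {η : ℝ} (hη : η ≠ 0)
    (k : ι) (u : EuclideanSpace ℝ ι) :
    η ^ 2 * ‖u - η⁻¹ • EuclideanSpace.single k 1‖ ^ 2 = 1 - 2 * η * u k + η ^ 2 * ‖u‖ ^ 2 := by
  rw [norm_sub_sq_real, real_inner_smul_right, EuclideanSpace.inner_single_right, norm_smul,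
    PiLp.norm_single]
  simp only [Real.ringHom_apply, one_mul, norm_inv, Real.norm_eq_abs, norm_one, mul_one, inv_pow,
    sq_abs]
  field_simp
  ring

lemma inv_ofReal_norm_sub_inv_smul_single {ι : Type*} [Fintype ι] [DecidableEq ι] {η : ℝ}
    (hη : 0 < η) (k : ι) (u : EuclideanSpace ℝ ι) :
    (ENNReal.ofReal ‖u - η⁻¹ • EuclideanSpace.single k 1‖)⁻¹ =
      ENNReal.ofReal η / ENNReal.ofReal (√(1 - 2 * η * u k + η ^ 2 * ‖u‖ ^ 2)) := by
  rw [← sq_mul_norm_sub_inv_smul_single hη.ne', ← mul_pow, Real.sqrt_sq (by positivity),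
    ENNReal.ofReal_mul hη.le, ENNReal.div_eq_inv_mul,
    ENNReal.mul_inv (.inl (by simpa using hη)) (.inl ENNReal.ofReal_ne_top), mul_comm, ← mul_assoc,
    ENNReal.mul_inv_cancel (by simpa using hη) ENNReal.ofReal_ne_top, one_mul]

lemma measurable_vee {d N : ℕ} : Measurable (Vee (d := d) (N := N)) :=
  Finset.measurable_sum _ fun i _ => Finset.measurable_sum _ fun j _ => by
    split_ifs
    · fun_prop
    · exact measurable_const

lemma lintegral_symN {d N : ℕ} (γ : Measure (Fin N → EuclideanSpace ℝ (Fin d)))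
    {f : (Fin N → EuclideanSpace ℝ (Fin d)) → ENNReal} (hf : Measurable f)
    (hf_perm : ∀ (σ : Equiv.Perm (Fin N)) z, f (z ∘ σ) = f z) :
    ∫⁻ z, f z ∂(symN γ) = ∫⁻ z, f z ∂γ := by
  have hmap : ∀ σ : Equiv.Perm (Fin N),
      ∫⁻ z, f z ∂(Measure.map (fun z => z ∘ σ) γ) = ∫⁻ z, f z ∂γ := fun σ => by
    rw [lintegral_map hf (by fun_prop)]
    exact lintegral_congr fun z => hf_perm σ z
  rw [symN, lintegral_smul_measure, lintegral_finsetSum_measure, Finset.sum_congr rfl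
    fun σ _ => hmap σ, Finset.sum_const, Finset.card_univ, Fintype.card_perm, Fintype.card_fin,
    nsmul_eq_mul, smul_eq_mul, ← mul_assoc,
    ENNReal.inv_mul_cancel (by exact_mod_cast N.factorial_ne_zero) (by simp), one_mul]

lemma vee_couple {d Nα Nβ : ℕ} (hd : 0 < d) {η : ℝ} (hη : 0 < η)
    {rα rβ : EuclideanSpace ℝ (Fin d)}
    (hrα : rα = (-(1 / (2 * η))) • EuclideanSpace.single (⟨0, hd⟩ : Fin d) (1 : ℝ))
    (hrβ : rβ = (1 / (2 * η)) • EuclideanSpace.single (⟨0, hd⟩ : Fin d) (1 : ℝ))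
    (p : (Fin Nα → EuclideanSpace ℝ (Fin d)) × (Fin Nβ → EuclideanSpace ℝ (Fin d))) :
    Vee (couple rα rβ p) = Veta hd η p.1 p.2 := by
  have hgap : rβ - rα = η⁻¹ • EuclideanSpace.single (⟨0, hd⟩ : Fin d) (1 : ℝ) := by
    rw [hrα, hrβ, ← sub_smul]
    congr 1
    field_simp
    ring
  have hcross : ∀ i j, p.1 i + rα - (p.2 j + rβ) = (p.1 i - p.2 j) - (rβ - rα) := fun i j => by
    abel
  rw [couple, vee_append, vee_add_const, vee_add_const, Veta]
  simp only [hcross, hgap, inv_ofReal_norm_sub_inv_smul_single hη, PiLp.sub_apply]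
  rfl

theorem stmt_2_general {d Nα Nβ : ℕ} (hd : 0 < d)
    (η : ℝ) (hη : 0 < η)
    (rα rβ : EuclideanSpace ℝ (Fin d))
    (hrα : rα = (-(1 / (2 * η))) • EuclideanSpace.single (⟨0, hd⟩ : Fin d) (1 : ℝ))
    (hrβ : rβ = (1 / (2 * η)) • EuclideanSpace.single (⟨0, hd⟩ : Fin d) (1 : ℝ))
    (ρα ρβ : Measure (EuclideanSpace ℝ (Fin d))) :
    (∀ (γα : Measure (Fin Nα → EuclideanSpace ℝ (Fin d)))
        (γβ : Measure (Fin Nβ → EuclideanSpace ℝ (Fin d))),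
        IsProbabilityMeasure γα → IsProbabilityMeasure γβ →
        ∫⁻ z, Vee z ∂(symN (Measure.map (couple rα rβ) (γα.prod γβ))) =
          ∫⁻ q, Veta hd η q.1 q.2 ∂(γα.prod γβ)) ∧
    (⨅ q : {q : Measure (Fin Nα → EuclideanSpace ℝ (Fin d)) ×
              Measure (Fin Nβ → EuclideanSpace ℝ (Fin d)) //
            IsProbabilityMeasure q.1 ∧ IsProbabilityMeasure q.2 ∧
            (∀ i : Fin Nα, Measure.map (fun z => z i) q.1 = ρα) ∧
            (∀ j : Fin Nβ, Measure.map (fun z => z j) q.2 = ρβ)},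
        ∫⁻ z, Vee z ∂(symN (Measure.map (couple rα rβ) (q.val.1.prod q.val.2)))) =
      ⨅ q : {q : Measure (Fin Nα → EuclideanSpace ℝ (Fin d)) ×
              Measure (Fin Nβ → EuclideanSpace ℝ (Fin d)) //
            IsProbabilityMeasure q.1 ∧ IsProbabilityMeasure q.2 ∧
            (∀ i : Fin Nα, Measure.map (fun z => z i) q.1 = ρα) ∧
            (∀ j : Fin Nβ, Measure.map (fun z => z j) q.2 = ρβ)},
        ∫⁻ w, Veta hd η w.1 w.2 ∂(q.val.1.prod q.val.2) := by
  have hintegral : ∀ (γα : Measure (Fin Nα → EuclideanSpace ℝ (Fin d)))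
      (γβ : Measure (Fin Nβ → EuclideanSpace ℝ (Fin d))),
      ∫⁻ z, Vee z ∂(symN (Measure.map (couple rα rβ) (γα.prod γβ))) =
        ∫⁻ q, Veta hd η q.1 q.2 ∂(γα.prod γβ) := fun γα γβ => by
    rw [lintegral_symN _ measurable_vee vee_comp_perm,
      lintegral_map measurable_vee (by unfold couple; fun_prop)]
    exact lintegral_congr (vee_couple hd hη hrα hrβ)
  exact ⟨fun γα γβ _ _ => hintegral γα γβ, iInf_congr fun q => hintegral q.1.1 q.1.2⟩

theorem stmt_2 {d Nα Nβ : ℕ} (hd : 0 < d) (hNα : 0 < Nα) (hNβ : 0 < Nβ)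
    (η : ℝ) (hη : 0 < η)
    (rα rβ : EuclideanSpace ℝ (Fin d))
    (hrα : rα = (-(1 / (2 * η))) • EuclideanSpace.single (⟨0, hd⟩ : Fin d) (1 : ℝ))
    (hrβ : rβ = (1 / (2 * η)) • EuclideanSpace.single (⟨0, hd⟩ : Fin d) (1 : ℝ))
    (ρα ρβ : Measure (EuclideanSpace ℝ (Fin d)))
    [IsProbabilityMeasure ρα] [IsProbabilityMeasure ρβ] :
    (∀ (γα : Measure (Fin Nα → EuclideanSpace ℝ (Fin d)))
        (γβ : Measure (Fin Nβ → EuclideanSpace ℝ (Fin d))),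
        IsProbabilityMeasure γα → IsProbabilityMeasure γβ →
        ∫⁻ z, Vee z ∂(symN (Measure.map (couple rα rβ) (γα.prod γβ))) =
          ∫⁻ q, Veta hd η q.1 q.2 ∂(γα.prod γβ)) ∧
    (⨅ q : {q : Measure (Fin Nα → EuclideanSpace ℝ (Fin d)) ×
              Measure (Fin Nβ → EuclideanSpace ℝ (Fin d)) //
            IsProbabilityMeasure q.1 ∧ IsProbabilityMeasure q.2 ∧
            (∀ i : Fin Nα, Measure.map (fun z => z i) q.1 = ρα) ∧
            (∀ j : Fin Nβ, Measure.map (fun z => z j) q.2 = ρβ)},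
        ∫⁻ z, Vee z ∂(symN (Measure.map (couple rα rβ) (q.val.1.prod q.val.2)))) =
      ⨅ q : {q : Measure (Fin Nα → EuclideanSpace ℝ (Fin d)) ×
              Measure (Fin Nβ → EuclideanSpace ℝ (Fin d)) //
            IsProbabilityMeasure q.1 ∧ IsProbabilityMeasure q.2 ∧
            (∀ i : Fin Nα, Measure.map (fun z => z i) q.1 = ρα) ∧
            (∀ j : Fin Nβ, Measure.map (fun z => z j) q.2 = ρβ)},
        ∫⁻ w, Veta hd η w.1 w.2 ∂(q.val.1.prod q.val.2) :=
  stmt_2_general hd η hη rα rβ hrα hrβ ρα ρβ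
end
end

section
/- Let d, Nα, Nβ ≥ 1 and let ρα, ρβ be compactly supported Borel probability measures on ℝ^d. Set mα := ∫ x¹ dρα(x) and mβ := ∫ y¹ dρβ(y). Then there exist constants C ≥ 0 and η₀ > 0 such that for every η ∈ (0, η₀), every γα ∈ Π_{Nα}(ρα) and every γβ ∈ Π_{Nβ}(ρβ), one has | ∫ Σ_{i=1}^{Nα} Σ_{j=1}^{Nβ} η/√(1 − 2η(x_i¹ − y_j¹) + η²|x_i − y_j|²) d(γα ⊗ γβ) − NαNβ·η − NαNβ(mα − mβ)·η² − (1/2)η³ ∫ Σ_{i=1}^{Nα} Σ_{j=1}^{Nβ} (3(x_i¹ − y_j¹)² − |x_i − y_j|²) d(γα ⊗ γβ) | ≤ C η⁴. -/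
/-!
With `a = x¹ - y¹` and `b = |x - y|` the integrand is `η (1 - t)^(-1/2)` for
`t = 2ηa - η²b²`, and expanding `(1 - t)^(-1/2)` to second order in `t` turns it into
`η + a η² + (3a² - b²) η³ / 2` up to an error `O(η⁴)`, uniformly while `a` and `b` stay bounded,
which they do on the compact supports. Each of the `Nα Nβ` pair terms only sees the law of
`(x_i, y_j)`, which is `ρα ⊗ ρβ` whatever the couplings `γα`, `γβ`, so the errors add up to
`Nα Nβ · O(η⁴)` and the linear term integrates to `mα - mβ`.
-/

open MeasureTheory

theorem abs_one_div_sqrt_one_sub_sub_taylor_le {t : ℝ} (ht : |t| ≤ 1 / 2) :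
    |1 / √(1 - t) - (1 + t / 2 + 3 * t ^ 2 / 8)| ≤ |t| ^ 3 := by
  obtain ⟨htl, htr⟩ := abs_le.mp ht
  set s := √(1 - t)
  have hs2 : s ^ 2 = 1 - t := Real.sq_sqrt (by linarith)
  have hs : 7 / 10 ≤ s := by nlinarith [Real.sqrt_nonneg (1 - t)]
  have hrem : 1 / s - (1 + t / 2 + 3 * t ^ 2 / 8) =
      t ^ 3 * ((3 * s ^ 2 + 9 * s + 8) / (8 * s * (1 + s) ^ 3)) := by
    rw [show t = 1 - s ^ 2 by linarith]
    field_simp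
    ring
  have hfactor : (3 * s ^ 2 + 9 * s + 8) / (8 * s * (1 + s) ^ 3) ≤ 1 := by
    rw [div_le_one (by positivity)]
    nlinarith
  rw [hrem, abs_mul, abs_pow, abs_of_nonneg (by positivity : (0 : ℝ) ≤ _ / _)]
  exact mul_le_of_le_one_right (by positivity) hfactor

theorem abs_div_sqrt_sub_taylor_le {M η a b : ℝ} (ha : |a| ≤ M) (hb : |b| ≤ M) (hη0 : 0 ≤ η)
    (hη : η * (M + 1) ^ 2 ≤ 1 / 4) :
    |η / √(1 - 2 * η * a + η ^ 2 * b ^ 2) - (η + a * η ^ 2 + (3 * a ^ 2 - b ^ 2) / 2 * η ^ 3)|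
      ≤ 3 * (M + 1) ^ 6 * η ^ 4 := by
  have hM : 0 ≤ M := (abs_nonneg a).trans ha
  have hη1 : η ≤ 1 := by nlinarith
  obtain ⟨ha₁, ha₂⟩ := abs_le.mp ha
  have hb2 : b ^ 2 ≤ M ^ 2 := by simpa only [sq_abs] using pow_le_pow_left₀ (abs_nonneg b) hb 2
  set t := 2 * η * a - η ^ 2 * b ^ 2
  have ht : |t| ≤ η * (M + 1) ^ 2 := by
    rw [abs_le]
    constructor <;> nlinarith [sq_nonneg b, mul_nonneg hη0 hη0]
  have hsqrt := abs_one_div_sqrt_one_sub_sub_taylor_le (t := t) (by linarith)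
  have hsplit : η / √(1 - 2 * η * a + η ^ 2 * b ^ 2) -
      (η + a * η ^ 2 + (3 * a ^ 2 - b ^ 2) / 2 * η ^ 3) =
      η * (1 / √(1 - t) - (1 + t / 2 + 3 * t ^ 2 / 8)) +
        η ^ 4 * (3 / 8 * η * b ^ 4 - 3 / 2 * a * b ^ 2) := by
    rw [show 1 - 2 * η * a + η ^ 2 * b ^ 2 = 1 - t by ring]
    ring
  have hfirst : |η * (1 / √(1 - t) - (1 + t / 2 + 3 * t ^ 2 / 8))| ≤ (M + 1) ^ 6 * η ^ 4 :=
    calc _ ≤ η * |t| ^ 3 := by rw [abs_mul, abs_of_nonneg hη0]; gcongr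
      _ ≤ η * (η * (M + 1) ^ 2) ^ 3 := by gcongr
      _ = (M + 1) ^ 6 * η ^ 4 := by ring
  have hsecond : |3 / 8 * η * b ^ 4 - 3 / 2 * a * b ^ 2| ≤ 2 * (M + 1) ^ 6 := by
    have hN3 : (M + 1) ^ 3 ≤ (M + 1) ^ 6 := pow_le_pow_right₀ (by linarith) (by norm_num)
    have hN4 : (M + 1) ^ 4 ≤ (M + 1) ^ 6 := pow_le_pow_right₀ (by linarith) (by norm_num)
    have hb2' : b ^ 2 ≤ (M + 1) ^ 2 := hb2.trans (by nlinarith)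
    have hab : |a * b ^ 2| ≤ (M + 1) ^ 3 := by
      rw [abs_mul, abs_of_nonneg (sq_nonneg b)]
      calc |a| * b ^ 2 ≤ (M + 1) * (M + 1) ^ 2 :=
            mul_le_mul (by linarith) hb2' (sq_nonneg b) (by linarith)
        _ = (M + 1) ^ 3 := by ring
    have hb4 : η * b ^ 4 ≤ (M + 1) ^ 4 := by
      calc η * b ^ 4 ≤ 1 * (b ^ 2) ^ 2 := by rw [← pow_mul]; gcongr
        _ ≤ ((M + 1) ^ 2) ^ 2 := by rw [one_mul]; gcongr
        _ = (M + 1) ^ 4 := by ring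
    rw [abs_le] at hab ⊢
    constructor <;> nlinarith [mul_nonneg hη0 (pow_nonneg (sq_nonneg b) 2)]
  rw [hsplit]
  calc _ ≤ _ := abs_add_le _ _
    _ ≤ (M + 1) ^ 6 * η ^ 4 + η ^ 4 * (2 * (M + 1) ^ 6) := by
        refine add_le_add hfirst ?_
        rw [abs_mul, abs_of_nonneg (by positivity : (0 : ℝ) ≤ η ^ 4)]
        gcongr
    _ = 3 * (M + 1) ^ 6 * η ^ 4 := by ring

theorem div_sqrt_one_sub_le {M η a b : ℝ} (ha : |a| ≤ M) (hη0 : 0 ≤ η)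
    (hη : η * (M + 1) ^ 2 ≤ 1 / 4) : η / √(1 - 2 * η * a + η ^ 2 * b ^ 2) ≤ 2 * η := by
  have hM : 0 ≤ M := (abs_nonneg a).trans ha
  have hηa : 2 * η * a ≤ 1 / 2 := by
    nlinarith [mul_le_mul_of_nonneg_left ((le_abs_self a).trans ha) hη0]
  have hsqrt : 1 / 2 ≤ √(1 - 2 * η * a + η ^ 2 * b ^ 2) :=
    Real.le_sqrt_of_sq_le (by nlinarith [sq_nonneg (η * b)])
  calc η / √(1 - 2 * η * a + η ^ 2 * b ^ 2) ≤ η / (1 / 2) := by gcongr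
    _ = 2 * η := by ring

section ProbabilitySpace

variable {Ω : Type*} [MeasurableSpace Ω] {μ : Measure Ω} {a b : Ω → ℝ} {M η : ℝ}

theorem integrable_three_mul_sq_sub_sq [IsFiniteMeasure μ] (ha : Measurable a) (hb : Measurable b)
    (haM : ∀ᵐ ω ∂μ, |a ω| ≤ M) (hbM : ∀ᵐ ω ∂μ, |b ω| ≤ M) :
    Integrable (fun ω => 3 * a ω ^ 2 - b ω ^ 2) μ := by
  refine .of_bound (by fun_prop) (4 * M ^ 2) ?_
  filter_upwards [haM, hbM] with ω haω hbω
  have ha2 : a ω ^ 2 ≤ M ^ 2 := by simpa only [sq_abs] using pow_le_pow_left₀ (abs_nonneg _) haω 2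
  have hb2 : b ω ^ 2 ≤ M ^ 2 := by simpa only [sq_abs] using pow_le_pow_left₀ (abs_nonneg _) hbω 2
  rw [Real.norm_eq_abs, abs_le]
  constructor <;> nlinarith [sq_nonneg (a ω), sq_nonneg (b ω)]

theorem integrable_div_sqrt_one_sub [IsFiniteMeasure μ] (ha : Measurable a) (hb : Measurable b)
    (haM : ∀ᵐ ω ∂μ, |a ω| ≤ M) (hη0 : 0 ≤ η) (hη : η * (M + 1) ^ 2 ≤ 1 / 4) :
    Integrable (fun ω => η / √(1 - 2 * η * a ω + η ^ 2 * b ω ^ 2)) μ := by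
  refine .of_bound (by fun_prop : Measurable _).aestronglyMeasurable (2 * η) ?_
  filter_upwards [haM] with ω haω
  rw [Real.norm_eq_abs, abs_of_nonneg (by positivity)]
  exact div_sqrt_one_sub_le haω hη0 hη

theorem abs_integral_div_sqrt_sub_taylor_le [IsProbabilityMeasure μ] (ha : Measurable a)
    (hb : Measurable b) (haM : ∀ᵐ ω ∂μ, |a ω| ≤ M) (hbM : ∀ᵐ ω ∂μ, |b ω| ≤ M) (hη0 : 0 ≤ η)
    (hη : η * (M + 1) ^ 2 ≤ 1 / 4) :
    |∫ ω, η / √(1 - 2 * η * a ω + η ^ 2 * b ω ^ 2) ∂μ - η - η ^ 2 * ∫ ω, a ω ∂μ -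
        1 / 2 * η ^ 3 * ∫ ω, 3 * a ω ^ 2 - b ω ^ 2 ∂μ| ≤ 3 * (M + 1) ^ 6 * η ^ 4 := by
  have hia : Integrable a μ := .of_bound ha.aestronglyMeasurable M haM
  have hig := integrable_three_mul_sq_sub_sq ha hb haM hbM
  have hpoly : Integrable (fun ω => η + a ω * η ^ 2 + (3 * a ω ^ 2 - b ω ^ 2) / 2 * η ^ 3) μ :=
    ((integrable_const η).add (hia.mul_const _)).add ((hig.div_const 2).mul_const _)
  have hpoly_int : ∫ ω, η + a ω * η ^ 2 + (3 * a ω ^ 2 - b ω ^ 2) / 2 * η ^ 3 ∂μ =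
      η + η ^ 2 * ∫ ω, a ω ∂μ + 1 / 2 * η ^ 3 * ∫ ω, 3 * a ω ^ 2 - b ω ^ 2 ∂μ := by
    rw [integral_add (f := fun ω => η + a ω * η ^ 2)
        ((integrable_const η).add (hia.mul_const _)) ((hig.div_const 2).mul_const _),
      integral_add (integrable_const η) (hia.mul_const _), integral_mul_const, integral_mul_const,
      integral_div, integral_const]
    simp only [probReal_univ, one_smul]
    ring
  rw [sub_sub, sub_sub, ← add_assoc, ← hpoly_int,
    ← integral_sub (integrable_div_sqrt_one_sub ha hb haM hη0 hη) hpoly]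
  have hrem : ∀ᵐ ω ∂μ, ‖η / √(1 - 2 * η * a ω + η ^ 2 * b ω ^ 2) -
      (η + a ω * η ^ 2 + (3 * a ω ^ 2 - b ω ^ 2) / 2 * η ^ 3)‖ ≤ 3 * (M + 1) ^ 6 * η ^ 4 := by
    filter_upwards [haM, hbM] with ω haω hbω
    exact abs_div_sqrt_sub_taylor_le haω hbω hη0 hη
  simpa using norm_integral_le_of_norm_le_const hrem

end ProbabilitySpace

theorem integral_sum_sum_comp_eq {X Y ι κ : Type*} [MeasurableSpace X] [MeasurableSpace Y]
    [Fintype ι] [Fintype κ] {γα : Measure (ι → X)} {γβ : Measure (κ → Y)} [SFinite γα]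
    [SFinite γβ] {ρα : Measure X} {ρβ : Measure Y} (hα : ∀ i, γα.map (fun z => z i) = ρα)
    (hβ : ∀ j, γβ.map (fun z => z j) = ρβ) {f : X × Y → ℝ} (hf : Integrable f (ρα.prod ρβ)) :
    ∫ q, ∑ i, ∑ j, f (q.1 i, q.2 j) ∂(γα.prod γβ) =
      Fintype.card ι * Fintype.card κ * ∫ p, f p ∂(ρα.prod ρβ) := by
  have hmap (i : ι) (j : κ) : (γα.prod γβ).map (fun q => (q.1 i, q.2 j)) = ρα.prod ρβ := by
    rw [← hα i, ← hβ j, Measure.map_prod_map _ _ (measurable_pi_apply i) (measurable_pi_apply j)]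
    rfl
  have hint (i : ι) (j : κ) : Integrable (fun q => f (q.1 i, q.2 j)) (γα.prod γβ) :=
    (hmap i j ▸ hf).comp_measurable (by fun_prop)
  have hcoord (i : ι) (j : κ) : ∫ q, f (q.1 i, q.2 j) ∂(γα.prod γβ) = ∫ p, f p ∂(ρα.prod ρβ) := by
    rw [← integral_map (by fun_prop) (hmap i j ▸ hf.aestronglyMeasurable), hmap]
  rw [integral_finsetSum _ fun i _ => integrable_finsetSum _ fun j _ => hint i j]
  simp only [integral_finsetSum _ fun j _ => hint _ j, hcoord, Finset.sum_const, Finset.card_univ,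
    nsmul_eq_mul]
  ring

theorem integral_fst_sub_snd {X Y : Type*} [MeasurableSpace X] [MeasurableSpace Y] {μ : Measure X}
    {ν : Measure Y} [IsProbabilityMeasure μ] [IsProbabilityMeasure ν] {f : X → ℝ} {g : Y → ℝ}
    (hf : Integrable f μ) (hg : Integrable g ν) :
    ∫ p, f p.1 - g p.2 ∂(μ.prod ν) = ∫ x, f x ∂μ - ∫ y, g y ∂ν := by
  rw [integral_sub (hf.comp_fst ν) (hg.comp_snd μ), integral_fun_fst, integral_fun_snd]
  simp

theorem exists_ae_norm_le_of_isCompact {E : Type*} [SeminormedAddCommGroup E] [MeasurableSpace E]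
    {ρ : Measure E} {K : Set E} (hK : IsCompact K) (hρK : ρ Kᶜ = 0) : ∃ R, ∀ᵐ x ∂ρ, ‖x‖ ≤ R := by
  obtain ⟨R, hR⟩ := hK.isBounded.subset_closedBall 0
  exact ⟨R, (ae_iff.2 hρK : ∀ᵐ x ∂ρ, x ∈ K).mono fun x hx => by simpa using hR hx⟩

theorem ae_prod_norm_sub_le {E : Type*} [SeminormedAddCommGroup E] [MeasurableSpace E]
    {μ ν : Measure E} {R S : ℝ} (hR : ∀ᵐ x ∂μ, ‖x‖ ≤ R) (hS : ∀ᵐ y ∂ν, ‖y‖ ≤ S) :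
    ∀ᵐ p ∂μ.prod ν, ‖p.1 - p.2‖ ≤ R + S := by
  filter_upwards [Measure.quasiMeasurePreserving_fst.ae hR,
    Measure.quasiMeasurePreserving_snd.ae hS] with p hp₁ hp₂
  exact (norm_sub_le _ _).trans (add_le_add hp₁ hp₂)

theorem EuclideanSpace.abs_apply_le_norm {ι : Type*} [Fintype ι] (x : EuclideanSpace ℝ ι) (k : ι) :
    |x k| ≤ ‖x‖ :=
  PiLp.norm_apply_le x k

theorem EuclideanSpace.integrable_apply_of_ae_norm_le {ι : Type*} [Fintype ι]
    {ρ : Measure (EuclideanSpace ℝ ι)} [IsFiniteMeasure ρ] {R : ℝ} (hR : ∀ᵐ x ∂ρ, ‖x‖ ≤ R)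
    (k : ι) : Integrable (fun x => x k) ρ :=
  .of_bound (by fun_prop : Measurable _).aestronglyMeasurable R
    (hR.mono fun x hx => (abs_apply_le_norm x k).trans hx)

theorem stmt_4_general {d Nα Nβ : ℕ} (hd : 0 < d)
    (ρα ρβ : Measure (EuclideanSpace ℝ (Fin d)))
    [IsProbabilityMeasure ρα] [IsProbabilityMeasure ρβ]
    (hKα : ∃ K : Set (EuclideanSpace ℝ (Fin d)), IsCompact K ∧ ρα Kᶜ = 0)
    (hKβ : ∃ K : Set (EuclideanSpace ℝ (Fin d)), IsCompact K ∧ ρβ Kᶜ = 0) :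
    ∃ C : ℝ, 0 ≤ C ∧ ∃ η₀ : ℝ, 0 < η₀ ∧
      ∀ η ∈ Set.Ioo (0 : ℝ) η₀,
        ∀ (γα : Measure (Fin Nα → EuclideanSpace ℝ (Fin d)))
          (γβ : Measure (Fin Nβ → EuclideanSpace ℝ (Fin d))),
          IsProbabilityMeasure γα → IsProbabilityMeasure γβ →
          (∀ i : Fin Nα, Measure.map (fun z => z i) γα = ρα) →
          (∀ j : Fin Nβ, Measure.map (fun z => z j) γβ = ρβ) →
          |(∫ q, (∑ i : Fin Nα, ∑ j : Fin Nβ,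
                η / Real.sqrt (1 - 2 * η * (q.1 i ⟨0, hd⟩ - q.2 j ⟨0, hd⟩) +
                  η ^ 2 * ‖q.1 i - q.2 j‖ ^ 2)) ∂(γα.prod γβ)) -
              (Nα : ℝ) * (Nβ : ℝ) * η -
              (Nα : ℝ) * (Nβ : ℝ) *
                ((∫ x, x ⟨0, hd⟩ ∂ρα) - ∫ y, y ⟨0, hd⟩ ∂ρβ) * η ^ 2 -
              (1 / 2) * η ^ 3 *
                ∫ q, (∑ i : Fin Nα, ∑ j : Fin Nβ,
                  (3 * (q.1 i ⟨0, hd⟩ - q.2 j ⟨0, hd⟩) ^ 2 - ‖q.1 i - q.2 j‖ ^ 2))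
                  ∂(γα.prod γβ)| ≤ C * η ^ 4 := by
  obtain ⟨Kα, hKα, hρKα⟩ := hKα
  obtain ⟨Kβ, hKβ, hρKβ⟩ := hKβ
  obtain ⟨Rα, hRα⟩ := exists_ae_norm_le_of_isCompact hKα hρKα
  obtain ⟨Rβ, hRβ⟩ := exists_ae_norm_le_of_isCompact hKβ hρKβ
  set M := Rα + Rβ
  refine ⟨Nα * Nβ * (3 * (M + 1) ^ 6), by positivity, 1 / (4 * (M + 1) ^ 2 + 1), by positivity, ?_⟩
  rintro η ⟨hη0, hηη₀⟩ γα γβ hγα hγβ hmα hmβ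
  have hη : η * (M + 1) ^ 2 ≤ 1 / 4 := by
    rw [lt_div_iff₀ (by positivity)] at hηη₀
    nlinarith
  have hdist : ∀ᵐ p ∂ρα.prod ρβ, ‖p.1 - p.2‖ ≤ M := ae_prod_norm_sub_le hRα hRβ
  have ha : ∀ᵐ p ∂ρα.prod ρβ, |p.1 ⟨0, hd⟩ - p.2 ⟨0, hd⟩| ≤ M :=
    hdist.mono fun p hp => (EuclideanSpace.abs_apply_le_norm (p.1 - p.2) _).trans hp
  have hb : ∀ᵐ p ∂ρα.prod ρβ, |‖p.1 - p.2‖| ≤ M := hdist.mono fun p hp => by rwa [abs_norm]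
  have hma : Measurable fun p : EuclideanSpace ℝ (Fin d) × EuclideanSpace ℝ (Fin d) =>
    p.1 ⟨0, hd⟩ - p.2 ⟨0, hd⟩ := by fun_prop
  have hmb : Measurable fun p : EuclideanSpace ℝ (Fin d) × EuclideanSpace ℝ (Fin d) =>
    ‖p.1 - p.2‖ := by fun_prop
  rw [integral_sum_sum_comp_eq hmα hmβ (integrable_div_sqrt_one_sub hma hmb ha hη0.le hη),
    integral_sum_sum_comp_eq hmα hmβ (integrable_three_mul_sq_sub_sq hma hmb ha hb),
    ← integral_fst_sub_snd (EuclideanSpace.integrable_apply_of_ae_norm_le hRα _)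
      (EuclideanSpace.integrable_apply_of_ae_norm_le hRβ _)]
  have hbound := abs_integral_div_sqrt_sub_taylor_le hma hmb ha hb hη0.le hη
  have hN : (0 : ℝ) ≤ Nα * Nβ := by positivity
  refine (Eq.trans_le ?_ (mul_le_mul_of_nonneg_left hbound hN)).trans_eq (by ring)
  rw [Fintype.card_fin, Fintype.card_fin]
  conv_rhs => rw [← abs_of_nonneg hN, ← abs_mul]
  ring_nf

theorem stmt_4 {d Nα Nβ : ℕ} (hd : 0 < d) (hNα : 0 < Nα) (hNβ : 0 < Nβ)
    (ρα ρβ : Measure (EuclideanSpace ℝ (Fin d)))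
    [IsProbabilityMeasure ρα] [IsProbabilityMeasure ρβ]
    (hKα : ∃ K : Set (EuclideanSpace ℝ (Fin d)), IsCompact K ∧ ρα Kᶜ = 0)
    (hKβ : ∃ K : Set (EuclideanSpace ℝ (Fin d)), IsCompact K ∧ ρβ Kᶜ = 0) :
    ∃ C : ℝ, 0 ≤ C ∧ ∃ η₀ : ℝ, 0 < η₀ ∧
      ∀ η ∈ Set.Ioo (0 : ℝ) η₀,
        ∀ (γα : Measure (Fin Nα → EuclideanSpace ℝ (Fin d)))
          (γβ : Measure (Fin Nβ → EuclideanSpace ℝ (Fin d))),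
          IsProbabilityMeasure γα → IsProbabilityMeasure γβ →
          (∀ i : Fin Nα, Measure.map (fun z => z i) γα = ρα) →
          (∀ j : Fin Nβ, Measure.map (fun z => z j) γβ = ρβ) →
          |(∫ q, (∑ i : Fin Nα, ∑ j : Fin Nβ,
                η / Real.sqrt (1 - 2 * η * (q.1 i ⟨0, hd⟩ - q.2 j ⟨0, hd⟩) +
                  η ^ 2 * ‖q.1 i - q.2 j‖ ^ 2)) ∂(γα.prod γβ)) -
              (Nα : ℝ) * (Nβ : ℝ) * η -
              (Nα : ℝ) * (Nβ : ℝ) *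
                ((∫ x, x ⟨0, hd⟩ ∂ρα) - ∫ y, y ⟨0, hd⟩ ∂ρβ) * η ^ 2 -
              (1 / 2) * η ^ 3 *
                ∫ q, (∑ i : Fin Nα, ∑ j : Fin Nβ,
                  (3 * (q.1 i ⟨0, hd⟩ - q.2 j ⟨0, hd⟩) ^ 2 - ‖q.1 i - q.2 j‖ ^ 2))
                  ∂(γα.prod γβ)| ≤ C * η ^ 4 :=
  stmt_4_general hd ρα ρβ hKα hKβ
end
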